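/- arXiv:1901.00605 — 2 statements merged into one kernel-verified Lean document; each statement's English description precedes it below -/
import Mathlib

section
/- Let $m, s, k$ be positive integers with $ms > 1$, and set $D = m\big(2(2ms-1)^k + m(s - (2ms-1)^k)^2\big)$. Then $D$ is a non-square positive integer and the fundamental period of the regular continued fraction expansion of $\sqrt{D}$ has length $6k - 2$. -/
/-- The Gauss-map iterates of `x`: `cfX x 0 = x` and
`cfX x (n+1) = 1 / (cfX x n - ⌊cfX x n⌋)`. -/
noncomputable def cfX (x : ℝ) : ℕ → ℝ
  | 0 => x
  | n + 1 => (cfX x n - ⌊cfX x n⌋)⁻¹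

/-- The `n`-th partial quotient of the regular continued fraction of `x`. -/
noncomputable def cfA (x : ℝ) (n : ℕ) : ℤ := ⌊cfX x n⌋

/-- `p` is a period (from index `1` on) of the continued fraction expansion of `x`. -/
def cfPeriod (x : ℝ) (p : ℕ) : Prop :=
  0 < p ∧ ∀ n, 1 ≤ n → cfA x (n + p) = cfA x n

/-!
Put `r = 2ms - 1`, `t = r ^ k` and `A = m (t - s)`. Then `D = (A + 1) ^ 2 + r` with
`0 < r < 2A + 3`, so `D` lies strictly between two consecutive squares. A complete quotient
`(P + √D) / Q` has partial quotient `a` and successor `(P' + √D) / Q'` as soon as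
`P + P' = a Q`, `P' ^ 2 + Q Q' = D`, `0 ≤ P'`, `0 < Q'` and `Q' < Q + 2 P'`, so the expansion is
certified by integer identities and inequalities alone. After the first step the denominators
climb through `r, r ^ 2, …, r ^ k` in blocks of three steps (partial quotients
`2m r ^ (k - j) - 1, r ^ j - 1, 1`), turn around through `Q = 2m` (partial quotient `t - s`),
descend symmetrically, and reach `(A + 1 + √D) / 1` after `6k - 3` steps. All these partial
quotients are below `2A + 2`, which is the next one and leads back to the first complete quotient:
`6k - 2` is a period, and no shorter one exists because `2A + 2` occurs only once in it.
-/

lemma cfX_add (x : ℝ) (a n : ℕ) : cfX x (a + n) = cfX (cfX x a) n := by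
  induction n with
  | zero => rfl
  | succ n ih => rw [← Nat.add_assoc, cfX, cfX, ih]

lemma cfX_one (x : ℝ) : cfX x 1 = (x - ⌊x⌋)⁻¹ := rfl

lemma cfA_add (x : ℝ) (a n : ℕ) : cfA x (a + n) = cfA (cfX x a) n := by
  rw [cfA, cfA, cfX_add]

def CFSegment (B : ℤ) (L : ℕ) (ξ η : ℝ) : Prop :=
  cfX ξ L = η ∧ ∀ j < L, cfA ξ j < B

namespace CFSegment

variable {B : ℤ} {L M : ℕ} {ξ η ζ : ℝ}

lemma trans (h₁ : CFSegment B L ξ η) (h₂ : CFSegment B M η ζ) :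
    CFSegment B (L + M) ξ ζ := by
  refine ⟨by rw [cfX_add, h₁.1, h₂.1], fun j hj => ?_⟩
  rcases lt_or_ge j L with hjL | hjL
  · exact h₁.2 j hjL
  · obtain ⟨i, rfl⟩ := Nat.exists_eq_add_of_le hjL
    rw [cfA_add, h₁.1]
    exact h₂.2 i (by omega)

lemma iterate {K : ℕ} {f : ℕ → ℝ} (h : ∀ i < K, CFSegment B L (f i) (f (i + 1))) :
    CFSegment B (K * L) (f 0) (f K) := by
  induction K with
  | zero => exact ⟨by rw [Nat.zero_mul]; rfl, by simp⟩
  | succ K ih =>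
    rw [Nat.succ_mul]
    exact (ih fun i hi => h i (by omega)).trans (h K (by omega))

end CFSegment

theorem isLeast_cfPeriod_of_cfSegment {x ξ η : ℝ} {B : ℤ} {L : ℕ} (hξ : cfX x 1 = ξ)
    (hseg : CFSegment B L ξ η) (hη : ⌊η⌋ = B) (hback : (η - B)⁻¹ = ξ) :
    IsLeast {p | cfPeriod x p} (L + 1) := by
  have hreturn : cfX x (1 + (L + 1)) = cfX x 1 := by
    rw [cfX_add, hξ, cfX_add, hseg.1, cfX_one, hη, hback]
  have hA : ∀ j, cfA x (1 + j) = cfA ξ j := fun j => by rw [cfA_add, hξ]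
  refine ⟨⟨by omega, fun n hn => ?_⟩, fun p ⟨hp, hper⟩ => ?_⟩
  · obtain ⟨j, rfl⟩ := Nat.exists_eq_add_of_le hn
    rw [Nat.add_right_comm, cfA_add, hreturn, ← cfA_add]
  · by_contra! hlt
    have h := hper (L + 1 - p) (by omega)
    rw [Nat.sub_add_cancel hlt.le, Nat.add_comm, hA, cfA, hseg.1, hη,
      show 1 + L - p = 1 + (L - p) by omega, hA] at h
    exact (hseg.2 _ (by omega)).ne' h

noncomputable def quadSurd (D P Q : ℤ) : ℝ := (P + √(D : ℝ)) / Q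

lemma quadSurd_zero_one (D : ℤ) : quadSurd D 0 1 = √(D : ℝ) := by simp [quadSurd]

lemma floor_quadSurd_and_inv {D P Q a P' Q' : ℤ} (hQ : 0 < Q) (hQ' : 0 < Q')
    (hP' : 0 ≤ P') (hsum : P + P' = a * Q) (hD : P' ^ 2 + Q * Q' = D)
    (hlt : Q' < Q + 2 * P') :
    ⌊quadSurd D P Q⌋ = a ∧ (quadSurd D P Q - a)⁻¹ = quadSurd D P' Q' := by
  have hQR : (0 : ℝ) < Q := by exact_mod_cast hQ
  have hsumR : (P : ℝ) + P' = a * Q := by exact_mod_cast hsum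
  have hDR : (P' : ℝ) ^ 2 + Q * Q' = D := by exact_mod_cast hD
  have hsq : √(D : ℝ) ^ 2 = D := Real.sq_sqrt (by rw [← hDR]; positivity)
  have hlo : (P' : ℝ) < √(D : ℝ) :=
    (Real.lt_sqrt (by positivity)).2 (by rw [← hDR]; simp only [lt_add_iff_pos_right]; positivity)
  have hhi : √(D : ℝ) < P' + Q :=
    (Real.sqrt_lt' (by positivity)).2 (by
      have hltR : (Q' : ℝ) < Q + 2 * P' := by exact_mod_cast hlt
      rw [← hDR]; nlinarith [mul_pos hQR (sub_pos.2 hltR)])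
  unfold quadSurd
  constructor
  · rw [Int.floor_eq_iff, le_div_iff₀ hQR, div_lt_iff₀ hQR]
    constructor <;> linarith
  · rw [show (P + √(D : ℝ)) / Q - a = (√(D : ℝ) - P') / Q by field_simp; linarith, inv_div,
      div_eq_div_iff (by linarith) (by positivity)]
    linear_combination hDR - hsq

lemma CFSegment.quadSurd_step {B D P Q a P' Q' : ℤ} (hQ : 0 < Q) (hQ' : 0 < Q')
    (hP' : 0 ≤ P') (hsum : P + P' = a * Q) (hD : P' ^ 2 + Q * Q' = D)
    (hlt : Q' < Q + 2 * P') (ha : a < B) :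
    CFSegment B 1 (quadSurd D P Q) (quadSurd D P' Q') := by
  obtain ⟨hfloor, hinv⟩ := floor_quadSurd_and_inv hQ hQ' hP' hsum hD hlt
  refine ⟨?_, fun j hj => ?_⟩
  · rw [cfX_one, hfloor, hinv]
  · rwa [Nat.lt_one_iff.mp hj, cfA, cfX, hfloor]

def radicand (m s t : ℤ) : ℤ := m * (2 * t + m * (s - t) ^ 2)

noncomputable def risingState (m s t x : ℤ) : ℝ :=
  quadSurd (radicand m s t) (m * (t + s) - x) x

noncomputable def fallingState (m s t g : ℤ) : ℝ :=
  quadSurd (radicand m s t) (m * (t - s)) g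

section Radicand

variable {m s : ℤ}

lemma pos_and_le_two_mul_mul_sub_one (hm : 0 < m) (hms : 1 < m * s) :
    0 < s ∧ s + 1 ≤ 2 * m * s - 1 := by
  have hs : 0 < s := pos_of_mul_pos_right (by omega) hm.le
  exact ⟨hs, by nlinarith⟩

lemma CFSegment.rising_step (hm : 0 < m) (hms : 1 < m * s) {x y t : ℤ}
    (hx : 2 * m * s - 1 ≤ x) (hy : 1 ≤ y) (ht : x * y = t) :
    CFSegment (2 * m * (t - s) + 2) 1 (risingState m s t x)
      (quadSurd (radicand m s t) (m * (t - s)) (2 * m * y)) := by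
  obtain ⟨-, hr⟩ := pos_and_le_two_mul_mul_sub_one hm hms
  subst ht
  have hxy : s ≤ (x - 1) * y := by nlinarith
  refine CFSegment.quadSurd_step (a := 2 * m * y - 1) ?_ ?_ ?_ ?_ ?_ ?_ ?_
  all_goals first | (unfold radicand; ring) | nlinarith [mul_nonneg hm.le (sub_nonneg.2 hxy)]

lemma CFSegment.rising (hm : 0 < m) (hms : 1 < m * s) {x y t : ℤ}
    (hx : 2 * m * s - 1 ≤ x) (hy : 2 * m * s - 1 ≤ y) (ht : x * y = t) :
    CFSegment (2 * m * (t - s) + 2) 3 (risingState m s t x)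
      (risingState m s t ((2 * m * s - 1) * x)) := by
  obtain ⟨hs, hr⟩ := pos_and_le_two_mul_mul_sub_one hm hms
  subst ht
  have hx2 : 0 ≤ (x - 2) * y := mul_nonneg (by omega) (by omega)
  refine ((CFSegment.rising_step hm hms hx (by omega) rfl).trans
    (CFSegment.quadSurd_step (a := x - 1) (P' := m * (x * y + s - 2 * y))
      (Q' := 2 * m * (y - s) * (x - 1) + x) ?_ ?_ ?_ ?_ ?_ ?_ ?_)).trans
    (CFSegment.quadSurd_step (a := 1) ?_ ?_ ?_ ?_ ?_ ?_ ?_)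
  all_goals first | (unfold radicand; ring) | nlinarith

lemma CFSegment.turn (hm : 0 < m) (hms : 1 < m * s) {t : ℤ} (ht : 2 * m * s - 1 ≤ t) :
    CFSegment (2 * m * (t - s) + 2) 2 (risingState m s t t) (fallingState m s t t) := by
  obtain ⟨-, hr⟩ := pos_and_le_two_mul_mul_sub_one hm hms
  refine (CFSegment.rising_step hm hms ht le_rfl (mul_one t)).trans
    (CFSegment.quadSurd_step (a := t - s) ?_ ?_ ?_ ?_ ?_ ?_ ?_)
  all_goals first | (unfold radicand; ring) | nlinarith

lemma CFSegment.falling (hm : 0 < m) (hms : 1 < m * s) {p g t : ℤ}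
    (hp : 1 ≤ p) (hg : 2 * m * s - 1 ≤ g) (ht : (2 * m * s - 1) * p * g = t) :
    CFSegment (2 * m * (t - s) + 2) 3 (fallingState m s t ((2 * m * s - 1) * g))
      (fallingState m s t g) := by
  obtain ⟨hs, hr⟩ := pos_and_le_two_mul_mul_sub_one hm hms
  subst ht
  have hu : 2 * m * s - 1 ≤ (2 * m * s - 1) * p := le_mul_of_one_le_right (by omega) hp
  have hB : 0 ≤ m * ((2 * m * s - 1) * p * g - s - p) := mul_nonneg hm.le (by nlinarith)
  have hP' : 0 ≤ m * ((2 * m * s - 1) * p * (g - 2)) := mul_nonneg hm.le (by nlinarith)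
  have hQ' : 0 ≤ (g - 2) * (4 * m * ((2 * m * s - 1) * p) - 2 * m * s) :=
    mul_nonneg (by omega) (by nlinarith)
  have hg' : 0 ≤ (m - 1) * ((2 * m * s - 1) * p * g - s) := mul_nonneg (by omega) (by nlinarith)
  refine ((CFSegment.quadSurd_step (a := 2 * m * p - 1)
      (P' := m * ((2 * m * s - 1) * p * g + s) - (2 * m * s - 1) * g)
      (Q' := 2 * m * ((2 * m * s - 1) * p - s) * (g - 1) + g) ?_ ?_ ?_ ?_ ?_ ?_ ?_).trans
    (CFSegment.quadSurd_step (a := 1)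
      (P' := m * ((2 * m * s - 1) * p * g + s - 2 * ((2 * m * s - 1) * p)))
      (Q' := 2 * m * ((2 * m * s - 1) * p)) ?_ ?_ ?_ ?_ ?_ ?_ ?_)).trans
    (CFSegment.quadSurd_step (a := g - 1) ?_ ?_ ?_ ?_ ?_ ?_ ?_)
  all_goals first | (unfold radicand; ring) | nlinarith

lemma CFSegment.falling_last (hm : 0 < m) (hms : 1 < m * s) {p t : ℤ}
    (hp : 1 ≤ p) (ht : (2 * m * s - 1) * p = t) :
    CFSegment (2 * m * (t - s) + 2) 1 (fallingState m s t (2 * m * s - 1))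
      (quadSurd (radicand m s t) (m * (t - s) + 1) 1) := by
  obtain ⟨-, hr⟩ := pos_and_le_two_mul_mul_sub_one hm hms
  subst ht
  have hmp : 0 ≤ m * ((2 * m * s - 1) * p - s - p) := mul_nonneg hm.le (by nlinarith)
  refine CFSegment.quadSurd_step (a := 2 * m * p - 1) ?_ ?_ ?_ ?_ ?_ ?_ ?_
  all_goals first | (unfold radicand; ring) | nlinarith

lemma floor_quadSurd_radicand_one (hm : 0 < m) (hms : 1 < m * s) {t P a : ℤ}
    (ht : 2 * m * s - 1 ≤ t) (ha : P + m * (t - s) + 1 = a) :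
    ⌊quadSurd (radicand m s t) P 1⌋ = a ∧
      (quadSurd (radicand m s t) P 1 - a)⁻¹ = risingState m s t (2 * m * s - 1) := by
  obtain ⟨-, hr⟩ := pos_and_le_two_mul_mul_sub_one hm hms
  subst ha
  refine floor_quadSurd_and_inv ?_ ?_ ?_ ?_ ?_ ?_
  all_goals first | (unfold radicand; ring) | nlinarith

lemma CFSegment.radicand_period (hm : 0 < m) (hms : 1 < m * s) {k : ℕ} (hk : 0 < k) :
    CFSegment (2 * m * ((2 * m * s - 1) ^ k - s) + 2) (6 * k - 3)
      (risingState m s ((2 * m * s - 1) ^ k) (2 * m * s - 1))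
      (quadSurd (radicand m s ((2 * m * s - 1) ^ k)) (m * ((2 * m * s - 1) ^ k - s) + 1) 1) := by
  obtain ⟨hs, hr⟩ := pos_and_le_two_mul_mul_sub_one hm hms
  set r := 2 * m * s - 1
  have hr1 : 1 ≤ r := by omega
  have hrise := CFSegment.iterate (K := k - 1)
    (f := fun q => risingState m s (r ^ k) (r ^ (q + 1))) fun q hq => by
      have h := CFSegment.rising hm hms (x := r ^ (q + 1)) (y := r ^ (k - 1 - q)) (t := r ^ k)
        (le_self_pow₀ hr1 (by omega)) (le_self_pow₀ hr1 (by omega))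
        (by rw [← pow_add]; congr 1; omega)
      rwa [← pow_succ'] at h
  have hturn := CFSegment.turn hm hms (le_self_pow₀ hr1 hk.ne')
  have hfall := CFSegment.iterate (K := k - 1)
    (f := fun i => fallingState m s (r ^ k) (r ^ (k - i))) fun i hi => by
      have h := CFSegment.falling hm hms (p := r ^ i) (g := r ^ (k - 1 - i)) (t := r ^ k)
        (one_le_pow₀ hr1) (le_self_pow₀ hr1 (by omega))
        (by rw [← pow_succ', ← pow_add]; congr 1; omega)
      rwa [← pow_succ', show k - 1 - i + 1 = k - i by omega,
        show k - 1 - i = k - (i + 1) by omega] at h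
  have hlast := CFSegment.falling_last hm hms (p := r ^ (k - 1)) (t := r ^ k) (one_le_pow₀ hr1)
    (by rw [← pow_succ']; congr 1; omega)
  simp only [zero_add, pow_one, Nat.sub_add_cancel hk, Nat.sub_zero, Nat.sub_sub_self hk]
    at hrise hfall
  have h := ((hrise.trans hturn).trans hfall).trans hlast
  rwa [show (k - 1) * 3 + 2 + (k - 1) * 3 + 1 = 6 * k - 3 by omega] at h

end Radicand

lemma Int.not_isSquare_sq_add {a c : ℤ} (hc : 0 < c) (hca : c < 2 * a + 1) :
    ¬IsSquare (a ^ 2 + c) := by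
  rintro ⟨e, he⟩
  have h₃ : |a| < |e| := sq_lt_sq.1 (by rw [sq e, ← he]; omega)
  have h₄ : |e| < |a + 1| := sq_lt_sq.1 (by rw [sq e, ← he]; nlinarith)
  have h₅ := abs_add_le a 1
  simp only [abs_one] at h₅
  omega

theorem period_cor1_general (m s k : ℕ) (hk : 0 < k)
    (hms : 1 < m * s) :
    let r : ℤ := 2 * m * s - 1
    let D : ℤ := m * (2 * r ^ k + m * ((s : ℤ) - r ^ k) ^ 2)
    0 < D ∧ ¬ IsSquare D ∧
      IsLeast {p : ℕ | cfPeriod (Real.sqrt (D : ℝ)) p} (6 * k - 2) := by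
  intro r D
  have hm : (0 : ℤ) < m := by
    have : m ≠ 0 := by rintro rfl; omega
    omega
  have hms' : (1 : ℤ) < m * s := by exact_mod_cast hms
  obtain ⟨-, hr⟩ := pos_and_le_two_mul_mul_sub_one hm hms'
  have ht : r ≤ r ^ k := le_self_pow₀ (by omega) hk.ne'
  have hD : D = (m * (r ^ k - s) + 1) ^ 2 + r := by simp only [D, r]; ring
  have hrA : r < 2 * (m * (r ^ k - s) + 1) + 1 := by nlinarith
  obtain ⟨h₀, h₀'⟩ := floor_quadSurd_radicand_one hm hms' ht (P := 0) rfl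
  obtain ⟨hN, hN'⟩ := floor_quadSurd_radicand_one hm hms' ht
    (P := m * (r ^ k - s) + 1) (a := 2 * m * (r ^ k - s) + 2) (by ring)
  have hstart : cfX √(radicand m s (r ^ k) : ℝ) 1 = risingState m s (r ^ k) r := by
    rw [cfX_one, ← quadSurd_zero_one, h₀, h₀']
  have hperiod := isLeast_cfPeriod_of_cfSegment hstart (CFSegment.radicand_period hm hms' hk) hN hN'
  rw [show 6 * k - 3 + 1 = 6 * k - 2 by omega] at hperiod
  exact ⟨hD ▸ add_pos_of_nonneg_of_pos (sq_nonneg _) (by omega),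
    hD ▸ Int.not_isSquare_sq_add (by omega) hrA, hperiod⟩

/-- for `m s > 1` and
`D = m(2(2ms-1)^k + m(s - (2ms-1)^k)^2)`, `D` is a non-square positive integer
and the fundamental period of the continued fraction of `√D` has length `6k - 2`. -/
theorem period_cor1 (m s k : ℕ) (hm : 0 < m) (hs : 0 < s) (hk : 0 < k)
    (hms : 1 < m * s) :
    let r : ℤ := 2 * m * s - 1
    let D : ℤ := m * (2 * r ^ k + m * ((s : ℤ) - r ^ k) ^ 2)
    0 < D ∧ ¬ IsSquare D ∧
      IsLeast {p : ℕ | cfPeriod (Real.sqrt (D : ℝ)) p} (6 * k - 2) :=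
  period_cor1_general m s k hk hms
end

section
/- Let $b, s, k$ be positive integers and set $D = (b(4bs-1)^{2k+1} + s)^2 - (4bs-1)^{2k+1}$. Then $D$ is a positive non-square integer and the fundamental period of the regular continued fraction expansion of $\sqrt{D}$ has length $6k + 5$. -/
/-!
The complete quotients of `√D` have the form `(√D + P) / Q` with integers `P, Q`, and one step
of the expansion is a few integer identities and inequalities between consecutive pairs `(P, Q)`.
For `M = 4bs - 1`, `A = b M^N + s` and `D = A² - M^N` (here `N = 2k + 1`), the pairs following
`(0, 1)` run periodically through the `3N + 2` states
`(A - M^m, 2A - M^m - M^(N-m))`, `(A - M^(N-m), M^(N-m))`, `(A - 2s, M^(m+1))`, `m = 0, 1, …`,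
ending at `(A - 1, 1)`, whose partial quotient `2A - 2` exceeds all the others and which leads
back to the first state. Everything reduces to `M^m * M^(N-m) = M^N` and `M + 1 = 4bs`.
-/

/-- The complete quotient `(√D + P) / Q` has partial quotient `a`, and the next complete quotient
is `(√D + P') / Q'`. -/
def IsSqrtCFStep (D P Q a P' Q' : ℤ) : Prop :=
  0 < Q ∧ 0 < Q' ∧ 0 ≤ P' ∧ P + P' = a * Q ∧ Q * Q' + P' ^ 2 = D ∧ D < (P' + Q) ^ 2

theorem IsSqrtCFStep.cfA_eq_and_cfX_succ_eq {x : ℝ} {n : ℕ} {D P Q a P' Q' : ℤ}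
    (h : IsSqrtCFStep D P Q a P' Q') (hx : cfX x n = (√(D : ℝ) + P) / Q) :
    cfA x n = a ∧ cfX x (n + 1) = (√(D : ℝ) + P') / Q' := by
  obtain ⟨hQ, hQ', hP', hsum, hnorm, hupper⟩ := h
  have hQR : (0 : ℝ) < Q := by exact_mod_cast hQ
  have hQR' : (0 : ℝ) < Q' := by exact_mod_cast hQ'
  have hsumR : (P : ℝ) + P' = a * Q := by exact_mod_cast hsum
  have hnormR : (Q : ℝ) * Q' + (P' : ℝ) ^ 2 = D := by exact_mod_cast hnorm
  have hD : (0 : ℝ) ≤ D := by rw [← hnormR]; positivity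
  have hsq : √(D : ℝ) ^ 2 = D := Real.sq_sqrt hD
  have hP'lt : (P' : ℝ) < √(D : ℝ) :=
    Real.lt_sqrt (by exact_mod_cast hP') |>.2 (by rw [← hnormR]; nlinarith)
  have hlt : √(D : ℝ) < P' + Q :=
    Real.sqrt_lt' (by positivity) |>.2 (by exact_mod_cast hupper)
  have hfloor : ⌊cfX x n⌋ = a := by
    rw [hx, Int.floor_eq_iff, le_div_iff₀ hQR, div_lt_iff₀ hQR]
    constructor <;> linarith
  refine ⟨hfloor, ?_⟩
  have hfract : cfX x n - ⌊cfX x n⌋ = (√(D : ℝ) - P') / Q := by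
    rw [hfloor, hx]
    field_simp
    linarith
  -- `(√D - P') (√D + P') = D - P'² = Q Q'`
  change (cfX x n - ⌊cfX x n⌋)⁻¹ = _
  rw [hfract, inv_div, div_eq_div_iff (by linarith) hQR'.ne']
  nlinarith

theorem cfA_sqrt_succ_eq_of_periodic {D a₀ : ℤ} {L : ℕ} {P Q a : ℕ → ℤ} (hL : 0 < L)
    (h₀ : IsSqrtCFStep D 0 1 a₀ (P 0) (Q 0))
    (h : ∀ r < L, IsSqrtCFStep D (P r) (Q r) (a r) (P ((r + 1) % L)) (Q ((r + 1) % L)))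
    (n : ℕ) : cfA √(D : ℝ) (n + 1) = a (n % L) := by
  have hX : ∀ n, cfX √(D : ℝ) (n + 1) = (√(D : ℝ) + P (n % L)) / Q (n % L) := by
    intro n
    induction n with
    | zero => simpa using (h₀.cfA_eq_and_cfX_succ_eq (n := 0) (by simp [cfX])).2
    | succ n ih =>
      rw [← Nat.mod_add_mod]
      exact ((h _ (Nat.mod_lt n hL)).cfA_eq_and_cfX_succ_eq ih).2
  exact ((h _ (Nat.mod_lt n hL)).cfA_eq_and_cfX_succ_eq (hX n)).1

theorem isLeast_cfPeriod_of_periodic {x : ℝ} {L : ℕ} {a : ℕ → ℤ}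
    (hx : ∀ n, cfA x (n + 1) = a (n % (L + 1))) (hmax : ∀ r < L, a r < a L) :
    IsLeast {p | cfPeriod x p} (L + 1) := by
  refine ⟨⟨L.succ_pos, fun n hn => ?_⟩, fun p ⟨hp, hper⟩ => ?_⟩
  · obtain ⟨m, rfl⟩ := Nat.exists_eq_add_of_le' hn
    rw [show m + 1 + (L + 1) = m + (L + 1) + 1 by ring, hx, hx, Nat.add_mod_right]
  · by_contra! hpL
    have h := hper (L + 1) le_add_self
    rw [show L + 1 + p = (p - 1 + (L + 1)) + 1 by omega, hx, hx, Nat.add_mod_right,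
      Nat.mod_eq_of_lt (by omega), Nat.mod_eq_of_lt L.lt_succ_self] at h
    exact (hmax (p - 1) (by omega)).ne h

theorem Int.not_isSquare_of_sq_lt_of_lt_sq {m n : ℤ} (hl : m ^ 2 < n)
    (hr : n < (m + 1) ^ 2) : ¬IsSquare n := by
  rintro ⟨t, rfl⟩
  rw [← sq] at hl hr
  have h₁ := sq_lt_sq.1 hl
  have h₂ := (sq_lt_sq.1 hr).trans_le ((abs_add_le m 1).trans_eq (by rw [abs_one]))
  omega

namespace PeriodFamily

variable (b s : ℤ) (N : ℕ)

def M : ℤ := 4 * b * s - 1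

def A : ℤ := b * M b s ^ N + s

def D : ℤ := A b s N ^ 2 - M b s ^ N

variable {b s}

theorem three_le_M (hb : 0 < b) (hs : 0 < s) : 3 ≤ M b s := by
  unfold M; nlinarith

theorem one_le_M_pow (hb : 0 < b) (hs : 0 < s) : 1 ≤ M b s ^ N :=
  one_le_pow₀ (by linarith [three_le_M hb hs])

theorem M_pow_add_one_le_A (hb : 0 < b) (hs : 0 < s) : M b s ^ N + 1 ≤ A b s N := by
  have := one_le_M_pow N hb hs
  unfold A; nlinarith

theorem sq_A_sub_one_lt_D (hb : 0 < b) (hs : 0 < s) : (A b s N - 1) ^ 2 < D b s N := by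
  unfold D; nlinarith [M_pow_add_one_le_A N hb hs, one_le_M_pow N hb hs]

theorem D_lt_sq_A (hb : 0 < b) (hs : 0 < s) : D b s N < A b s N ^ 2 := by
  unfold D; linarith [one_le_M_pow N hb hs]

theorem isSqrtCFStep_Q_eq_one (hb : 0 < b) (hs : 0 < s) (P : ℤ) :
    IsSqrtCFStep (D b s N) P 1 (P + A b s N - 1) (A b s N - 1)
      (2 * A b s N - 1 - M b s ^ N) := by
  have hA := M_pow_add_one_le_A N hb hs
  have hz := one_le_M_pow N hb hs
  refine ⟨one_pos, by linarith, by linarith, by ring, by unfold D; ring, ?_⟩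
  simpa using D_lt_sq_A N hb hs

theorem isSqrtCFStep_three_mul (hb : 0 < b) (hs : 0 < s) {x y : ℤ} (hx : 1 ≤ x) (hy : 1 ≤ y)
    (hxy : x * y = M b s ^ N) :
    IsSqrtCFStep (D b s N) (A b s N - x) (2 * A b s N - x - y) 1 (A b s N - y) y := by
  have hA := M_pow_add_one_le_A N hb hs
  -- from `(x - 1) (y - 1) ≥ 0`
  have hxy_le : x + y ≤ M b s ^ N + 1 := by nlinarith
  refine ⟨by linarith, by linarith, by nlinarith, by ring, ?_, ?_⟩
  · unfold D; rw [← hxy]; ring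
  · unfold D; nlinarith

theorem isSqrtCFStep_three_mul_add_one (hb : 0 < b) (hs : 0 < s) {x y : ℤ} (hx : 1 ≤ x)
    (hy : M b s ≤ y) (hxy : x * y = M b s ^ N) :
    IsSqrtCFStep (D b s N) (A b s N - y) y (2 * b * x - 1) (A b s N - 2 * s) (x * M b s) := by
  have hM := three_le_M hb hs
  have hMs : 4 * s - 1 ≤ M b s := by unfold M; nlinarith
  have hyz : y ≤ M b s ^ N := by nlinarith
  have hA : A b s N = b * (x * y) + s := by rw [hxy]; rfl
  refine ⟨by linarith, by positivity, ?_, ?_, ?_, ?_⟩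
  · rw [hA]; nlinarith
  · rw [hA]; ring
  · unfold D; rw [← hxy, hA]; unfold M; ring
  · unfold D; nlinarith [M_pow_add_one_le_A N hb hs]

theorem isSqrtCFStep_three_mul_add_two (hb : 0 < b) (hs : 0 < s) {u w : ℤ} (hu : 1 ≤ u)
    (hw : 1 ≤ w) (huw : u * w = M b s ^ N) :
    IsSqrtCFStep (D b s N) (A b s N - 2 * s) u (2 * b * w - 1) (A b s N - u)
      (2 * A b s N - u - w) := by
  have hA := M_pow_add_one_le_A N hb hs
  have huw_le : u + w ≤ M b s ^ N + 1 := by nlinarith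
  refine ⟨by linarith, by linarith, by nlinarith, ?_, ?_, ?_⟩
  · unfold A; rw [← huw]; ring
  · unfold D; rw [← huw]; ring
  · unfold D; nlinarith

variable (b s)

def stateP (r : ℕ) : ℤ :=
  if r % 3 = 0 then A b s N - M b s ^ (r / 3)
  else if r % 3 = 1 then A b s N - M b s ^ (N - r / 3)
  else A b s N - 2 * s

def stateQ (r : ℕ) : ℤ :=
  if r % 3 = 0 then 2 * A b s N - M b s ^ (r / 3) - M b s ^ (N - r / 3)
  else if r % 3 = 1 then M b s ^ (N - r / 3)
  else M b s ^ (r / 3 + 1)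

def quotient (r : ℕ) : ℤ :=
  if r = 3 * N + 1 then 2 * A b s N - 2
  else if r % 3 = 0 then 1
  else if r % 3 = 1 then 2 * b * M b s ^ (r / 3) - 1
  else 2 * b * M b s ^ (N - (r / 3 + 1)) - 1

section StateValues

variable {b s N} (m : ℕ)

theorem stateP_three_mul : stateP b s N (3 * m) = A b s N - M b s ^ m := by
  simp [stateP]

theorem stateP_three_mul_add_one : stateP b s N (3 * m + 1) = A b s N - M b s ^ (N - m) := by
  simp [stateP, Nat.add_mod, Nat.add_div]

theorem stateP_three_mul_add_two : stateP b s N (3 * m + 2) = A b s N - 2 * s := by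
  simp [stateP, Nat.add_mod]

theorem stateQ_three_mul :
    stateQ b s N (3 * m) = 2 * A b s N - M b s ^ m - M b s ^ (N - m) := by
  simp [stateQ]

theorem stateQ_three_mul_add_one : stateQ b s N (3 * m + 1) = M b s ^ (N - m) := by
  simp [stateQ, Nat.add_mod, Nat.add_div]

theorem stateQ_three_mul_add_two : stateQ b s N (3 * m + 2) = M b s ^ (m + 1) := by
  simp [stateQ, Nat.add_mod, Nat.add_div]

theorem quotient_three_mul : quotient b s N (3 * m) = 1 := by
  simp [quotient]; omega

theorem quotient_three_mul_add_one {m : ℕ} (hm : m < N) :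
    quotient b s N (3 * m + 1) = 2 * b * M b s ^ m - 1 := by
  simp [quotient, Nat.add_mod, Nat.add_div, hm.ne]

theorem quotient_three_mul_add_one_self : quotient b s N (3 * N + 1) = 2 * A b s N - 2 := by
  simp [quotient]

theorem quotient_three_mul_add_two :
    quotient b s N (3 * m + 2) = 2 * b * M b s ^ (N - (m + 1)) - 1 := by
  simp [quotient, Nat.add_mod, Nat.add_div]; omega

end StateValues

variable {b s}

theorem isSqrtCFStep_state (hb : 0 < b) (hs : 0 < s) {r : ℕ} (hr : r < 3 * N + 2) :
    IsSqrtCFStep (D b s N) (stateP b s N r) (stateQ b s N r) (quotient b s N r)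
      (stateP b s N ((r + 1) % (3 * N + 2))) (stateQ b s N ((r + 1) % (3 * N + 2))) := by
  have hM : 1 ≤ M b s := by linarith [three_le_M hb hs]
  have hsplit : ∀ m ≤ N, M b s ^ m * M b s ^ (N - m) = M b s ^ N := fun m hm => by
    rw [← pow_add, Nat.add_sub_cancel' hm]
  obtain ⟨m, rfl | rfl | rfl⟩ : ∃ m, r = 3 * m ∨ r = 3 * m + 1 ∨ r = 3 * m + 2 :=
    ⟨r / 3, by omega⟩
  · rw [Nat.mod_eq_of_lt (by omega), stateP_three_mul, stateQ_three_mul, quotient_three_mul,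
      stateP_three_mul_add_one, stateQ_three_mul_add_one]
    exact isSqrtCFStep_three_mul N hb hs (one_le_pow₀ hM) (one_le_pow₀ hM) (hsplit m (by omega))
  · rcases (by omega : m < N ∨ m = N) with hm | hm
    · rw [Nat.mod_eq_of_lt (by omega), stateP_three_mul_add_one, stateQ_three_mul_add_one,
        quotient_three_mul_add_one hm, stateP_three_mul_add_two, stateQ_three_mul_add_two,
        pow_succ]
      refine isSqrtCFStep_three_mul_add_one N hb hs (one_le_pow₀ hM) ?_ (hsplit m hm.le)
      exact le_self_pow₀ hM (by omega)
    · rw [hm, Nat.mod_self, show 0 = 3 * 0 from rfl, stateP_three_mul_add_one,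
        stateQ_three_mul_add_one, quotient_three_mul_add_one_self, stateP_three_mul,
        stateQ_three_mul]
      simp only [Nat.sub_self, Nat.sub_zero, pow_zero]
      have h := isSqrtCFStep_Q_eq_one N hb hs (A b s N - 1)
      rwa [show A b s N - 1 + A b s N - 1 = 2 * A b s N - 2 by ring] at h
  · rw [Nat.mod_eq_of_lt (by omega), stateP_three_mul_add_two, stateQ_three_mul_add_two,
      quotient_three_mul_add_two, show 3 * m + 2 + 1 = 3 * (m + 1) by ring, stateP_three_mul,
      stateQ_three_mul]
    exact isSqrtCFStep_three_mul_add_two N hb hs (one_le_pow₀ hM) (one_le_pow₀ hM)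
      (hsplit (m + 1) (by omega))

theorem quotient_lt_quotient_three_mul_add_one (hb : 0 < b) (hs : 0 < s) {r : ℕ}
    (hr : r < 3 * N + 1) : quotient b s N r < quotient b s N (3 * N + 1) := by
  have hA := M_pow_add_one_le_A N hb hs
  have hz := one_le_M_pow N hb hs
  have hM : 1 ≤ M b s := by linarith [three_le_M hb hs]
  have hpow : ∀ j ≤ N, 2 * b * M b s ^ j - 1 < 2 * A b s N - 2 := fun j hj => by
    have : M b s ^ j ≤ M b s ^ N := pow_le_pow_right₀ hM hj
    unfold A; nlinarith
  rw [quotient_three_mul_add_one_self]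
  obtain ⟨m, rfl | rfl | rfl⟩ : ∃ m, r = 3 * m ∨ r = 3 * m + 1 ∨ r = 3 * m + 2 :=
    ⟨r / 3, by omega⟩
  · rw [quotient_three_mul]; linarith
  · rw [quotient_three_mul_add_one (by omega)]; exact hpow m (by omega)
  · rw [quotient_three_mul_add_two]; exact hpow _ (Nat.sub_le _ _)

theorem isLeast_cfPeriod_sqrt_D (hb : 0 < b) (hs : 0 < s) :
    IsLeast {p | cfPeriod √(D b s N : ℝ) p} (3 * N + 2) := by
  have hstart : IsSqrtCFStep (D b s N) 0 1 (A b s N - 1) (stateP b s N 0) (stateQ b s N 0) := by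
    simpa [stateP, stateQ] using isSqrtCFStep_Q_eq_one N hb hs 0
  refine isLeast_cfPeriod_of_periodic (L := 3 * N + 1) (a := quotient b s N) (fun n => ?_)
    (fun r hr => quotient_lt_quotient_three_mul_add_one N hb hs hr)
  exact cfA_sqrt_succ_eq_of_periodic (by omega) hstart
    (fun r hr => isSqrtCFStep_state N hb hs hr) n

end PeriodFamily

theorem period_c7_general (b s k : ℕ) (hb : 0 < b) (hs : 0 < s) :
    let D : ℤ := ((b : ℤ) * (4 * (b : ℤ) * s - 1) ^ (2 * k + 1) + s) ^ 2 -
      (4 * (b : ℤ) * s - 1) ^ (2 * k + 1)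
    0 < D ∧ ¬ IsSquare D ∧
      IsLeast {p : ℕ | cfPeriod (Real.sqrt (D : ℝ)) p} (6 * k + 5) := by
  intro D
  have hb' : (0 : ℤ) < b := by exact_mod_cast hb
  have hs' : (0 : ℤ) < s := by exact_mod_cast hs
  have hlower := PeriodFamily.sq_A_sub_one_lt_D (2 * k + 1) hb' hs'
  have hupper := PeriodFamily.D_lt_sq_A (2 * k + 1) hb' hs'
  refine ⟨(sq_nonneg _).trans_lt hlower,
    Int.not_isSquare_of_sq_lt_of_lt_sq hlower (by rwa [sub_add_cancel]), ?_⟩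
  rw [show 6 * k + 5 = 3 * (2 * k + 1) + 2 by ring]
  exact PeriodFamily.isLeast_cfPeriod_sqrt_D (2 * k + 1) hb' hs'

/-- Corollary c7: for
`D = (b(4bs-1)^{2k+1} + s)^2 - (4bs-1)^{2k+1}`, `D` is a positive non-square
integer and the fundamental period of the continued fraction of `√D` has
length `6k + 5`. -/
theorem period_c7 (b s k : ℕ) (hb : 0 < b) (hs : 0 < s) (hk : 0 < k) :
    let D : ℤ := ((b : ℤ) * (4 * (b : ℤ) * s - 1) ^ (2 * k + 1) + s) ^ 2 -
      (4 * (b : ℤ) * s - 1) ^ (2 * k + 1)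
    0 < D ∧ ¬ IsSquare D ∧
      IsLeast {p : ℕ | cfPeriod (Real.sqrt (D : ℝ)) p} (6 * k + 5) :=
  period_c7_general b s k hb hs
end
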